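/- Let (G,w,A,B) be a normalized instance (G bipartite with bipartitions the independent sets A and B, 4-claw free, every 3-claw centered at a weight-2 vertex, and A' ∪ B' independent, where X' denotes weight-1 vertices of X). Suppose there is no local improvement of A of size 1 or 2. Let (U_i,V_i,e_i)_{i∈I} be a consistent family of tail changes, let A_r = A \ ∪U_i, B_r = B \ ∪V_i, let B_1 be the set of weight-2 vertices v ∈ B_r with |δ(v) \ {e_i : i∈I}| ≤ 1, and let A_1 = N(B_1, A_r). Then |A_1| = |B_1|, A_1 consists only of weight-2 vertices, every vertex of A_1 has exactly one neighbor in B_1 and vice versa, so the edges between A_1 and B_1 form a perfect matching between them. -/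

import Mathlib

open scoped Classical

variable {V : Type*}

noncomputable def nbhd (G : SimpleGraph V) (X A : Finset V) : Finset V :=
  A.filter (fun a => a ∈ X ∨ ∃ x ∈ X, G.Adj x a)

noncomputable def wsum (w : V → ℕ) (X : Finset V) : ℕ := ∑ v ∈ X, w v

def IsLocalImprovement (G : SimpleGraph V) (w : V → ℕ) (A X : Finset V) : Prop :=
  wsum w X > wsum w (nbhd G X A) ∨
    (wsum w X = wsum w (nbhd G X A) ∧
      ((nbhd G X A).filter (fun v => w v = 2)).card < (X.filter (fun v => w v = 2)).card)

/-!
Every vertex of `B` has at most three neighbours in `A` (no 4-claw, `A` independent). The tail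
changes are weight- and size-neutral exchanges, so if a set `T` of weight-2 vertices of `B_r` has
all its neighbours in a set `D` with `w(D) < 2|T|` together with the `U_i` of a few tail changes,
then `T ∪ ⋃ V_i` is a small local improvement. For `v ∈ B₁`, a neighbour joined to `v` by some
`e_i` lies in that `U_i` (as `e_i` meets `U_i ⊆ A`), so all neighbours of `v` but at most one lie
in tail changes, and a neighbour in `A_r` is that exceptional one. Taking `T = {v}` and `D = ∅` shows that `v` has a neighbour in `A_r`, necessarily unique.
Taking `D = {u}` for `u ∈ A₁` and `T` one or two of its neighbours in `B₁` shows that `w u = 2`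
and that `u` has only one neighbour in `B₁`.
-/

open Finset Function

section

variable {ι : Type*} {G : SimpleGraph V} {w : V → ℕ} {A B : Finset V}

theorem SimpleGraph.IsBipartiteWith.not_adj_of_mem_left {s t : Set V} {x y : V}
    (h : G.IsBipartiteWith s t) (hx : x ∈ s) (hy : y ∈ s) : ¬ G.Adj x y :=
  fun hadj => Set.disjoint_left.mp h.disjoint hy (h.mem_of_mem_adj hx hadj)

theorem card_filter_adj_le_three
    (h4claw : ¬ ∃ (c : V) (T : Finset V), T.card = 4 ∧ (∀ t ∈ T, G.Adj c t) ∧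
        (∀ t₁ ∈ T, ∀ t₂ ∈ T, t₁ ≠ t₂ → ¬ G.Adj t₁ t₂))
    (hA : ∀ x ∈ A, ∀ y ∈ A, ¬ G.Adj x y) (c : V) : (A.filter (G.Adj c)).card ≤ 3 := by
  by_contra! h
  obtain ⟨T, hT, hcard⟩ := exists_subset_card_eq (show 4 ≤ (A.filter (G.Adj c)).card by omega)
  exact h4claw ⟨c, T, hcard, fun t ht => (mem_filter.mp (hT ht)).2,
    fun t₁ h₁ t₂ h₂ _ => hA t₁ (mem_filter.mp (hT h₁)).1 t₂ (mem_filter.mp (hT h₂)).1⟩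

theorem exists_card_le_subset_biUnion {U : ι → Finset V} {X : Finset V}
    (h : ∀ a ∈ X, ∃ i, a ∈ U i) : ∃ S : Finset ι, S.card ≤ X.card ∧ X ⊆ S.biUnion U := by
  choose f hf using h
  exact ⟨X.attach.image fun a => f a.1 a.2, card_image_le.trans X.card_attach.le,
    fun a ha => mem_biUnion.mpr ⟨f a ha, mem_image_of_mem _ (mem_attach _ ⟨a, ha⟩), hf a ha⟩⟩

theorem wsum_union_le (X Y : Finset V) : wsum w (X ∪ Y) ≤ wsum w X + wsum w Y :=
  (Nat.le_add_right _ _).trans_eq sum_union_inter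

theorem wsum_biUnion {S : Finset ι} {U : ι → Finset V} (h : Pairwise (Disjoint on U)) :
    wsum w (S.biUnion U) = ∑ i ∈ S, wsum w (U i) :=
  sum_biUnion (h.set_pairwise _)

theorem nbhd_union (X Y : Finset V) : nbhd G (X ∪ Y) A = nbhd G X A ∪ nbhd G Y A := by
  ext a
  simp only [nbhd, mem_filter, mem_union]
  grind

theorem nbhd_biUnion (S : Finset ι) (W : ι → Finset V) :
    nbhd G (S.biUnion W) A = S.biUnion fun i => nbhd G (W i) A := by
  ext a
  simp only [nbhd, mem_filter, mem_biUnion]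
  grind

theorem mem_nbhd_of_disjoint {X : Finset V} (h : Disjoint X A) {a : V} :
    a ∈ nbhd G X A ↔ a ∈ A ∧ ∃ x ∈ X, G.Adj x a := by
  simp only [nbhd, mem_filter]
  have : a ∈ A → a ∉ X := fun ha hX => disjoint_left.mp h hX ha
  grind

theorem nbhd_eq_biUnion_of_disjoint {X : Finset V} (h : Disjoint X A) :
    nbhd G X A = X.biUnion fun x => A.filter (G.Adj x) := by
  ext a
  simp only [mem_nbhd_of_disjoint h, mem_biUnion, mem_filter]
  grind

def NoLocalImprovementUpTo (G : SimpleGraph V) (w : V → ℕ) (A : Finset V) (k : ℕ) : Prop :=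
  ∀ X : Finset V, X.card ≤ k → (∀ x ∈ X, ∀ y ∈ X, ¬ G.Adj x y) → ¬ IsLocalImprovement G w A X

theorem NoLocalImprovementUpTo.mono {k l : ℕ} (h : NoLocalImprovementUpTo G w A l) (hkl : k ≤ l) :
    NoLocalImprovementUpTo G w A k :=
  fun X hX => h X (hX.trans hkl)

structure IsConsistentTailChangeFamily (G : SimpleGraph V) (w : V → ℕ) (A B : Finset V)
    (U W : ι → Finset V) (e : ι → Sym2 V) : Prop where
  subset_left : ∀ i, U i ⊆ A
  subset_right : ∀ i, W i ⊆ B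
  card_eq : ∀ i, (U i).card = (W i).card
  wsum_eq : ∀ i, wsum w (U i) = wsum w (W i)
  nbhd_subset : ∀ i, nbhd G (W i) A ⊆ U i
  incident : ∀ i, ∃ u ∈ U i, u ∈ e i
  pairwise_disjoint_left : Pairwise (Disjoint on U)
  pairwise_disjoint_right : Pairwise (Disjoint on W)

noncomputable def remaining [Fintype ι] (A : Finset V) (U : ι → Finset V) : Finset V :=
  A \ univ.biUnion U

theorem mem_remaining [Fintype ι] {U : ι → Finset V} {a : V} :
    a ∈ remaining A U ↔ a ∈ A ∧ ∀ i, a ∉ U i := by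
  simp [remaining]

noncomputable def freeNeighborFinset [Fintype V] [Fintype ι] (G : SimpleGraph V)
    (e : ι → Sym2 V) (v : V) : Finset V :=
  univ.filter fun u => G.Adj v u ∧ ∀ i, e i ≠ s(v, u)

/-- The paper's `B₁` is `heavyLowFreeDegree G w e (remaining B W)`, and its `A_r` is
`remaining A U`. -/
noncomputable def heavyLowFreeDegree [Fintype V] [Fintype ι] (G : SimpleGraph V) (w : V → ℕ)
    (e : ι → Sym2 V) (Br : Finset V) : Finset V :=
  Br.filter fun v => w v = 2 ∧ (freeNeighborFinset G e v).card ≤ 1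

theorem mem_heavyLowFreeDegree [Fintype V] [Fintype ι] {e : ι → Sym2 V} {Br : Finset V} {v : V} :
    v ∈ heavyLowFreeDegree G w e Br ↔ v ∈ Br ∧ w v = 2 ∧ (freeNeighborFinset G e v).card ≤ 1 :=
  mem_filter

theorem mem_nbhd_heavyLowFreeDegree [Fintype V] [Fintype ι] (hB : G.IsBipartiteWith A B)
    {U W : ι → Finset V} {e : ι → Sym2 V} {u : V} :
    u ∈ nbhd G (heavyLowFreeDegree G w e (remaining B W)) (remaining A U) ↔
      u ∈ remaining A U ∧ ∃ v ∈ heavyLowFreeDegree G w e (remaining B W), G.Adj v u := by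
  refine mem_nbhd_of_disjoint (disjoint_left.mpr fun v hv hvA => ?_)
  exact Set.disjoint_left.mp hB.disjoint (mem_remaining.mp hvA).1
    (mem_remaining.mp (mem_heavyLowFreeDegree.mp hv).1).1

namespace IsConsistentTailChangeFamily

variable {U W : ι → Finset V} {e : ι → Sym2 V} {N : ℕ}

theorem isLocalImprovement_union (htc : IsConsistentTailChangeFamily G w A B U W e)
    {S : Finset ι} {T D : Finset V} (hT2 : ∀ t ∈ T, w t = 2) (hTW : ∀ t ∈ T, ∀ i, t ∉ W i)
    (hD : wsum w D < 2 * T.card) (hcov : nbhd G T A ⊆ D ∪ S.biUnion U) :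
    IsLocalImprovement G w A (T ∪ S.biUnion W) := by
  have hdisj : Disjoint T (S.biUnion W) :=
    disjoint_left.mpr fun t ht hW => by
      obtain ⟨i, -, hi⟩ := mem_biUnion.mp hW
      exact hTW t ht i hi
  have hnbhd : nbhd G (T ∪ S.biUnion W) A ⊆ D ∪ S.biUnion U := by
    rw [nbhd_union, nbhd_biUnion]
    exact union_subset hcov (subset_union_right.trans' (biUnion_mono fun i _ => htc.nbhd_subset i))
  left
  calc wsum w (nbhd G (T ∪ S.biUnion W) A)
      ≤ wsum w D + wsum w (S.biUnion U) := (sum_le_sum_of_subset hnbhd).trans (wsum_union_le _ _)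
    _ = wsum w D + ∑ i ∈ S, wsum w (W i) := by
        rw [wsum_biUnion htc.pairwise_disjoint_left]
        exact congrArg _ (sum_congr rfl fun i _ => htc.wsum_eq i)
    _ < 2 * T.card + ∑ i ∈ S, wsum w (W i) := by omega
    _ = wsum w (T ∪ S.biUnion W) := by
        rw [wsum, sum_union hdisj, sum_congr rfl hT2, sum_const, smul_eq_mul, mul_comm]
        exact congrArg _ (wsum_biUnion htc.pairwise_disjoint_right).symm

theorem false_of_exchange (hB : G.IsBipartiteWith A B)
    (htc : IsConsistentTailChangeFamily G w A B U W e) (hN : ∀ i, (U i).card ≤ N) {k : ℕ}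
    (hk : NoLocalImprovementUpTo G w A k) {S : Finset ι} {T D : Finset V} (hTB : T ⊆ B)
    (hT2 : ∀ t ∈ T, w t = 2) (hTW : ∀ t ∈ T, ∀ i, t ∉ W i) (hD : wsum w D < 2 * T.card)
    (hsize : T.card + S.card * N ≤ k) (hcov : nbhd G T A ⊆ D ∪ S.biUnion U) : False := by
  have hXB : T ∪ S.biUnion W ⊆ B :=
    union_subset hTB (biUnion_subset.mpr fun i _ => htc.subset_right i)
  have hXcard : (T ∪ S.biUnion W).card ≤ k :=
    calc (T ∪ S.biUnion W).card ≤ T.card + S.card * N :=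
          (card_union_le _ _).trans <| Nat.add_le_add_left
            (card_biUnion_le_card_mul _ _ _ fun i _ => htc.card_eq i ▸ hN i) _
      _ ≤ k := hsize
  exact hk _ hXcard (fun x hx y hy => hB.symm.not_adj_of_mem_left (hXB hx) (hXB hy))
    (htc.isLocalImprovement_union hT2 hTW hD hcov)

variable [Fintype ι]

theorem exists_adj_mem_remaining (hB : G.IsBipartiteWith A B)
    (htc : IsConsistentTailChangeFamily G w A B U W e) (hN : ∀ i, (U i).card ≤ N)
    (hdeg : ∀ v ∈ B, (A.filter (G.Adj v)).card ≤ 3) (hk : NoLocalImprovementUpTo G w A (3 * N + 1))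
    {v : V} (hv : v ∈ remaining B W) (hv2 : w v = 2) : ∃ u ∈ remaining A U, G.Adj v u := by
  by_contra! h
  rw [mem_remaining] at hv
  obtain ⟨S, hS, hcov⟩ :=
      exists_card_le_subset_biUnion (U := U) (X := A.filter (G.Adj v)) fun a ha => by
    by_contra! haU
    exact h a (mem_remaining.mpr ⟨(mem_filter.mp ha).1, haU⟩) (mem_filter.mp ha).2
  have hvA : v ∉ A := fun hvA => Set.disjoint_left.mp hB.disjoint hvA hv.1
  refine htc.false_of_exchange hB hN hk (S := S) (T := {v}) (D := ∅)
    (singleton_subset_iff.mpr hv.1)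
    (by simpa using hv2) (by simpa using hv.2) (by simp [wsum]) ?_ ?_
  · have := Nat.mul_le_mul_right N (hS.trans (hdeg v hv.1))
    rw [card_singleton]
    omega
  · rw [nbhd_eq_biUnion_of_disjoint (disjoint_singleton_left.mpr hvA), singleton_biUnion,
      empty_union]
    exact hcov

variable [Fintype V]

theorem mem_freeNeighborFinset (htc : IsConsistentTailChangeFamily G w A B U W e) {v a : V}
    (hv : v ∉ A) (hadj : G.Adj v a) (ha : ∀ i, a ∉ U i) : a ∈ freeNeighborFinset G e v := by
  refine mem_filter.mpr ⟨mem_univ a, hadj, fun i hi => ?_⟩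
  obtain ⟨u, hu, hue⟩ := htc.incident i
  rw [hi, Sym2.mem_iff] at hue
  rcases hue with rfl | rfl
  · exact hv (htc.subset_left i hu)
  · exact ha i hu

theorem eq_of_adj_of_forall_not_mem (htc : IsConsistentTailChangeFamily G w A B U W e)
    {v a b : V} (hfree : (freeNeighborFinset G e v).card ≤ 1) (hv : v ∉ A) (ha : G.Adj v a)
    (hb : G.Adj v b) (haU : ∀ i, a ∉ U i) (hbU : ∀ i, b ∉ U i) : a = b :=
  card_le_one.mp hfree a (htc.mem_freeNeighborFinset hv ha haU) b
    (htc.mem_freeNeighborFinset hv hb hbU)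

/-- The neighbours of the `t ∈ T` other than `u` are at most `2 |T| ≤ 4` vertices, none of
them free, so they lie in at most four tail changes; `T` together with those tail changes
would be a local improvement. -/
theorem false_of_adj_mem_remaining (hB : G.IsBipartiteWith A B)
    (htc : IsConsistentTailChangeFamily G w A B U W e) (hN : ∀ i, (U i).card ≤ N)
    (hdeg : ∀ v ∈ B, (A.filter (G.Adj v)).card ≤ 3) (hk : NoLocalImprovementUpTo G w A (4 * N + 2))
    {u : V} (hu : u ∈ remaining A U) {T : Finset V}
    (hT : T ⊆ heavyLowFreeDegree G w e (remaining B W)) (hTu : ∀ t ∈ T, G.Adj t u)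
    (hwu : w u < 2 * T.card) (hTcard : T.card ≤ 2) : False := by
  rw [mem_remaining] at hu
  have hTmem : ∀ t ∈ T, (t ∈ B ∧ ∀ i, t ∉ W i) ∧ w t = 2 ∧ (freeNeighborFinset G e t).card ≤ 1 :=
    fun t ht => by simpa only [mem_heavyLowFreeDegree, mem_remaining] using hT ht
  have hTA : Disjoint T A :=
    disjoint_left.mpr fun t ht htA => Set.disjoint_left.mp hB.disjoint htA (hTmem t ht).1.1
  set Y := T.biUnion fun t => (A.filter (G.Adj t)).erase u
  have hY : Y.card ≤ 2 * T.card := by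
    refine (card_biUnion_le_card_mul _ _ 2 fun t ht => ?_).trans_eq (mul_comm _ _)
    have huA : u ∈ A.filter (G.Adj t) := mem_filter.mpr ⟨hu.1, hTu t ht⟩
    have := hdeg t (hTmem t ht).1.1
    rw [card_erase_of_mem huA]
    omega
  obtain ⟨S, hS, hcov⟩ := exists_card_le_subset_biUnion (U := U) (X := Y) fun a ha => by
    obtain ⟨t, ht, hat⟩ := mem_biUnion.mp ha
    rw [mem_erase, mem_filter] at hat
    by_contra! haU
    exact hat.1 (htc.eq_of_adj_of_forall_not_mem (hTmem t ht).2.2 (disjoint_left.mp hTA ht)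
      hat.2.2 (hTu t ht) haU hu.2)
  refine htc.false_of_exchange hB hN hk (S := S) (D := {u}) (fun t ht => (hTmem t ht).1.1)
    (fun t ht => (hTmem t ht).2.1) (fun t ht => (hTmem t ht).1.2) (by simpa [wsum] using hwu)
    ?_ ?_
  · have := Nat.mul_le_mul_right N (hS.trans (hY.trans (by omega : 2 * T.card ≤ 4)))
    omega
  · rw [nbhd_eq_biUnion_of_disjoint hTA]
    intro a ha
    obtain ⟨t, ht, hat⟩ := mem_biUnion.mp ha
    by_cases hau : a = u
    · exact mem_union_left _ (mem_singleton.mpr hau)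
    · exact mem_union_right _ (hcov (mem_biUnion.mpr ⟨t, ht, mem_erase.mpr ⟨hau, hat⟩⟩))

theorem weight_eq_two_of_mem_nbhd (hw : ∀ v, w v = 1 ∨ w v = 2) (hB : G.IsBipartiteWith A B)
    (htc : IsConsistentTailChangeFamily G w A B U W e) (hN : ∀ i, (U i).card ≤ N)
    (hdeg : ∀ v ∈ B, (A.filter (G.Adj v)).card ≤ 3) (hk : NoLocalImprovementUpTo G w A (4 * N + 2))
    {u : V} (hu : u ∈ nbhd G (heavyLowFreeDegree G w e (remaining B W)) (remaining A U)) :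
    w u = 2 := by
  obtain ⟨huAr, v, hv, hadj⟩ := (mem_nbhd_heavyLowFreeDegree hB).mp hu
  refine (hw u).resolve_left fun hu1 => htc.false_of_adj_mem_remaining hB hN hdeg hk huAr
    (T := {v}) (singleton_subset_iff.mpr hv) (by simpa using hadj) (by simp [hu1]) (by simp)

theorem existsUnique_adj_of_mem_nbhd (hw : ∀ v, w v = 1 ∨ w v = 2) (hB : G.IsBipartiteWith A B)
    (htc : IsConsistentTailChangeFamily G w A B U W e) (hN : ∀ i, (U i).card ≤ N)
    (hdeg : ∀ v ∈ B, (A.filter (G.Adj v)).card ≤ 3) (hk : NoLocalImprovementUpTo G w A (4 * N + 2))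
    {u : V} (hu : u ∈ nbhd G (heavyLowFreeDegree G w e (remaining B W)) (remaining A U)) :
    ∃! v, v ∈ heavyLowFreeDegree G w e (remaining B W) ∧ G.Adj u v := by
  obtain ⟨huAr, v, hv, hadj⟩ := (mem_nbhd_heavyLowFreeDegree hB).mp hu
  refine ⟨v, ⟨hv, hadj.symm⟩, fun v' ⟨hv', hadj'⟩ => by_contra fun hne => ?_⟩
  refine htc.false_of_adj_mem_remaining hB hN hdeg hk huAr (T := {v', v})
    (insert_subset_iff.mpr ⟨hv', singleton_subset_iff.mpr hv⟩) ?_ ?_ (card_pair hne).le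
  · simpa using ⟨hadj'.symm, hadj⟩
  · rw [card_pair hne]
    rcases hw u with h | h <;> omega

theorem existsUnique_adj_of_mem_heavyLowFreeDegree (hB : G.IsBipartiteWith A B)
    (htc : IsConsistentTailChangeFamily G w A B U W e) (hN : ∀ i, (U i).card ≤ N)
    (hdeg : ∀ v ∈ B, (A.filter (G.Adj v)).card ≤ 3) (hk : NoLocalImprovementUpTo G w A (3 * N + 1))
    {v : V} (hv : v ∈ heavyLowFreeDegree G w e (remaining B W)) :
    ∃! u, u ∈ nbhd G (heavyLowFreeDegree G w e (remaining B W)) (remaining A U) ∧ G.Adj u v := by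
  obtain ⟨hvBr, hv2, hfree⟩ := mem_heavyLowFreeDegree.mp hv
  have hvA : v ∉ A := fun hvA => Set.disjoint_left.mp hB.disjoint hvA (mem_remaining.mp hvBr).1
  obtain ⟨u, hu, hadj⟩ := htc.exists_adj_mem_remaining hB hN hdeg hk hvBr hv2
  refine ⟨u, ⟨(mem_nbhd_heavyLowFreeDegree hB).mpr ⟨hu, v, hv, hadj⟩, hadj.symm⟩,
    fun u' ⟨hu', hadj'⟩ => ?_⟩
  exact htc.eq_of_adj_of_forall_not_mem hfree hvA hadj'.symm hadj
    (mem_remaining.mp ((mem_nbhd_heavyLowFreeDegree hB).mp hu').1).2 (mem_remaining.mp hu).2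

end IsConsistentTailChangeFamily

theorem Finset.card_eq_of_forall_existsUnique {α β : Type*} {s : Finset α} {t : Finset β}
    {r : α → β → Prop} (hs : ∀ a ∈ s, ∃! b, b ∈ t ∧ r a b) (ht : ∀ b ∈ t, ∃! a, a ∈ s ∧ r a b) :
    s.card = t.card := by
  choose f hf hfu using hs
  refine card_bij f (fun a ha => (hf a ha).1) (fun a ha a' ha' hf' => ?_) fun b hb => ?_
  · exact (ht _ (hf a ha).1).unique ⟨ha, (hf a ha).2⟩ ⟨ha', hf' ▸ (hf a' ha').2⟩
  · obtain ⟨a, ⟨ha, hab⟩, -⟩ := ht b hb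
    exact ⟨a, ha, (hfu a ha b ⟨hb, hab⟩).symm⟩

end

theorem tail_change_matching_general {ι : Type*} [Fintype ι] [Fintype V]
    (G : SimpleGraph V) (w : V → ℕ) (hw : ∀ v, w v = 1 ∨ w v = 2)
    (A B : Finset V)
    -- normalized instance: bipartite with bipartitions the independent sets A, B
    (hAB : Disjoint A B)
    (hbip : ∀ u v : V, G.Adj u v → (u ∈ A ∧ v ∈ B) ∨ (u ∈ B ∧ v ∈ A))
    -- 4-claw free, every 3-claw centered at a weight-2 vertex
    (h4claw : ¬ ∃ (c : V) (T : Finset V), T.card = 4 ∧ (∀ t ∈ T, G.Adj c t) ∧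
        (∀ t₁ ∈ T, ∀ t₂ ∈ T, t₁ ≠ t₂ → ¬ G.Adj t₁ t₂))
    -- a consistent family of tail changes, each of size at most N
    (N : ℕ) (Ui Vi : ι → Finset V) (ei : ι → Sym2 V)
    (hUsub : ∀ i, Ui i ⊆ A) (hVsub : ∀ i, Vi i ⊆ B)
    (hcardEq : ∀ i, (Ui i).card = (Vi i).card)
    (hwEq : ∀ i, wsum w (Ui i) = wsum w (Vi i))
    (hNV : ∀ i, nbhd G (Vi i) A ⊆ Ui i)
    (hincident : ∀ i, ∃ u ∈ Ui i, u ∈ ei i)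
    (hsizeN : ∀ i, (Ui i).card ≤ N)
    (hcons : ∀ i j : ι, i ≠ j → Disjoint (Ui i) (Ui j) ∧ Disjoint (Vi i) (Vi j))
    -- no local improvement of size at most 6N + 2
    (hnoimp : ∀ X : Finset V, X.card ≤ 6 * N + 2 →
        (∀ x ∈ X, ∀ y ∈ X, ¬ G.Adj x y) → ¬ IsLocalImprovement G w A X)
    -- the derived sets
    (Ar Br B₁ A₁ : Finset V)
    (hAr : Ar = A \ Finset.univ.biUnion Ui)
    (hBr : Br = B \ Finset.univ.biUnion Vi)
    (hB₁ : B₁ = Br.filter (fun v => w v = 2 ∧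
        (Finset.univ.filter (fun u => G.Adj v u ∧ ∀ i : ι, ei i ≠ s(v, u))).card ≤ 1))
    (hA₁ : A₁ = nbhd G B₁ Ar) :
    A₁.card = B₁.card ∧ (∀ u ∈ A₁, w u = 2) ∧
    (∀ u ∈ A₁, ∃! v : V, v ∈ B₁ ∧ G.Adj u v) ∧
    (∀ v ∈ B₁, ∃! u : V, u ∈ A₁ ∧ G.Adj u v) := by
  replace hAr : Ar = remaining A Ui := hAr
  replace hBr : Br = remaining B Vi := hBr
  replace hB₁ : B₁ = heavyLowFreeDegree G w ei Br := hB₁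
  subst hAr hBr hB₁ hA₁
  have hB : G.IsBipartiteWith A B := ⟨disjoint_coe.mpr hAB, hbip⟩
  have htc : IsConsistentTailChangeFamily G w A B Ui Vi ei :=
    ⟨hUsub, hVsub, hcardEq, hwEq, hNV, hincident, fun i j hij => (hcons i j hij).1,
      fun i j hij => (hcons i j hij).2⟩
  have hdeg : ∀ v ∈ B, (A.filter (G.Adj v)).card ≤ 3 := fun v _ =>
    card_filter_adj_le_three h4claw (fun _ hx _ hy => hB.not_adj_of_mem_left hx hy) v
  have hk : NoLocalImprovementUpTo G w A (6 * N + 2) := hnoimp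
  have hA₁ := fun u hu =>
    htc.existsUnique_adj_of_mem_nbhd hw hB hsizeN hdeg (hk.mono (by omega)) (u := u) hu
  have hB₁ := fun v hv =>
    htc.existsUnique_adj_of_mem_heavyLowFreeDegree hB hsizeN hdeg (hk.mono (by omega)) (v := v) hv
  exact ⟨card_eq_of_forall_existsUnique hA₁ hB₁,
    fun u hu => htc.weight_eq_two_of_mem_nbhd hw hB hsizeN hdeg (hk.mono (by omega)) hu, hA₁, hB₁⟩

/-- In a normalized instance `(G, w, A, B)` with no local improvement of
size at most `6N + 2`, given a consistent family of tail changes `(U_i, V_i, e_i)` each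
of size at most `N`, set `A_r = A \ ⋃ U_i`, `B_r = B \ ⋃ V_i`, let `B₁` consist of the
weight-2 vertices `v ∈ B_r` with at most one incident edge outside `{e_i}`, and let
`A₁ = N(B₁, A_r)`.  Then `|A₁| = |B₁|`, all vertices of `A₁` have weight 2, every vertex
of `A₁` has exactly one neighbor in `B₁` and vice versa, i.e. the edges between `A₁` and
`B₁` form a perfect matching between them. -/
theorem tail_change_matching {ι : Type*} [Fintype ι] [Fintype V]
    (G : SimpleGraph V) (w : V → ℕ) (hw : ∀ v, w v = 1 ∨ w v = 2)
    (A B : Finset V)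
    -- normalized instance: bipartite with bipartitions the independent sets A, B
    (hV : ∀ v : V, v ∈ A ∨ v ∈ B)
    (hAB : Disjoint A B)
    (hbip : ∀ u v : V, G.Adj u v → (u ∈ A ∧ v ∈ B) ∨ (u ∈ B ∧ v ∈ A))
    -- 4-claw free, every 3-claw centered at a weight-2 vertex
    (h4claw : ¬ ∃ (c : V) (T : Finset V), T.card = 4 ∧ (∀ t ∈ T, G.Adj c t) ∧
        (∀ t₁ ∈ T, ∀ t₂ ∈ T, t₁ ≠ t₂ → ¬ G.Adj t₁ t₂))
    (h3claw : ∀ (c : V) (T : Finset V), T.card = 3 → (∀ t ∈ T, G.Adj c t) →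
        (∀ t₁ ∈ T, ∀ t₂ ∈ T, t₁ ≠ t₂ → ¬ G.Adj t₁ t₂) → w c = 2)
    -- A' ∪ B' independent
    (hlight : ∀ u v : V, w u = 1 → w v = 1 → ¬ G.Adj u v)
    -- a consistent family of tail changes, each of size at most N
    (N : ℕ) (Ui Vi : ι → Finset V) (ei : ι → Sym2 V)
    (hUsub : ∀ i, Ui i ⊆ A) (hVsub : ∀ i, Vi i ⊆ B)
    (hcardEq : ∀ i, (Ui i).card = (Vi i).card)
    (hwEq : ∀ i, wsum w (Ui i) = wsum w (Vi i))
    (hNV : ∀ i, nbhd G (Vi i) A ⊆ Ui i)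
    (hincident : ∀ i, ∃ u ∈ Ui i, u ∈ ei i)
    (hsizeN : ∀ i, (Ui i).card ≤ N)
    (hcons : ∀ i j : ι, i ≠ j → Disjoint (Ui i) (Ui j) ∧ Disjoint (Vi i) (Vi j))
    -- no local improvement of size at most 6N + 2
    (hnoimp : ∀ X : Finset V, X.card ≤ 6 * N + 2 →
        (∀ x ∈ X, ∀ y ∈ X, ¬ G.Adj x y) → ¬ IsLocalImprovement G w A X)
    -- the derived sets
    (Ar Br B₁ A₁ : Finset V)
    (hAr : Ar = A \ Finset.univ.biUnion Ui)
    (hBr : Br = B \ Finset.univ.biUnion Vi)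
    (hB₁ : B₁ = Br.filter (fun v => w v = 2 ∧
        (Finset.univ.filter (fun u => G.Adj v u ∧ ∀ i : ι, ei i ≠ s(v, u))).card ≤ 1))
    (hA₁ : A₁ = nbhd G B₁ Ar) :
    A₁.card = B₁.card ∧ (∀ u ∈ A₁, w u = 2) ∧
    (∀ u ∈ A₁, ∃! v : V, v ∈ B₁ ∧ G.Adj u v) ∧
    (∀ v ∈ B₁, ∃! u : V, u ∈ A₁ ∧ G.Adj u v) :=
  tail_change_matching_general G w hw A B hAB hbip h4claw N Ui Vi ei hUsub hVsub hcardEq hwEq hNV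
    hincident hsizeN hcons hnoimp Ar Br B₁ A₁ hAr hBr hB₁ hA₁
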